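/- Let A be a real m×n matrix with m ≥ n, and let B₁ ∈ ℝ^{k×m} have orthonormal rows and C₁ ∈ ℝ^{n×k} have orthonormal columns, where k ≤ n. Let D = B₁ A C₁ with singular values δ₁ ≥ … ≥ δ_k, and let ρ₁ ≥ … ≥ ρ_n be the singular values of A. Then ρ_i ≥ δ_i for all 1 ≤ i ≤ k. -/

import Mathlib

open Matrix

noncomputable def specNorm {m n : ℕ} (A : Matrix (Fin m) (Fin n) ℝ) : ℝ :=
  ‖LinearMap.toContinuousLinearMap (Matrix.toEuclideanLin A)‖

noncomputable def froNorm {m n : ℕ} (A : Matrix (Fin m) (Fin n) ℝ) : ℝ :=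
  Real.sqrt (∑ i, ∑ j, (A i j) ^ 2)

/-- `ρ` enumerates the singular values of `A` (square roots of the eigenvalues of `AᵀA`)
in non-increasing order. -/
def IsSingularValues {m n : ℕ} (A : Matrix (Fin m) (Fin n) ℝ) (ρ : Fin n → ℝ) : Prop :=
  Antitone ρ ∧ ∃ e : Equiv.Perm (Fin n), ∀ i,
    ρ i = Real.sqrt (((by rw [← Matrix.conjTranspose_eq_transpose_of_trivial]; exact Matrix.isHermitian_conjTranspose_mul_self A : (Aᵀ * A).IsHermitian)).eigenvalues (e i))

/-!
Min–max argument. Write `D = B₁ A C₁`. Since `B₁` is a coisometry and `C₁` an isometry,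
`‖D w‖ ≤ ‖A (C₁ w)‖` and `‖C₁ w‖ = ‖w‖`. The eigenvectors of `DᵀD` for its `i + 1` largest
eigenvalues span a space on which `‖D w‖² ≥ δᵢ² ‖w‖²`; its image under `C₁` has dimension `i + 1`
and therefore meets the `(n - i)`-dimensional span of the eigenvectors of `AᵀA` for its smallest
eigenvalues, on which `‖A x‖² ≤ ρᵢ² ‖x‖²`. A common nonzero vector gives `δᵢ² ≤ ρᵢ²`.
-/

open Module Finset

lemma sub_le_card_filter_le_of_antitone_comp {ι : Type*} [Fintype ι] {n : ℕ} {μ : ι → ℝ}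
    {e : Fin n → ι} (he : Function.Injective e) (hμe : Antitone (μ ∘ e)) (i : Fin n) :
    n - i ≤ #{j | μ j ≤ μ (e i)} :=
  calc n - i = #((Ici i).map ⟨e, he⟩) := by simp
    _ ≤ #{j | μ j ≤ μ (e i)} := card_le_card fun j hj => by
      obtain ⟨l, hl, rfl⟩ := mem_map.mp hj
      simpa using hμe (mem_Ici.mp hl)

lemma succ_le_card_filter_ge_of_antitone_comp {ι : Type*} [Fintype ι] {n : ℕ} {μ : ι → ℝ}
    {e : Fin n → ι} (he : Function.Injective e) (hμe : Antitone (μ ∘ e)) (i : Fin n) :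
    i + 1 ≤ #{j | μ (e i) ≤ μ j} :=
  calc i + 1 = #((Iic i).map ⟨e, he⟩) := by simp
    _ ≤ #{j | μ (e i) ≤ μ j} := card_le_card fun j hj => by
      obtain ⟨l, hl, rfl⟩ := mem_map.mp hj
      simpa using hμe (mem_Iic.mp hl)

namespace Matrix

variable {ι κ : Type*} [Fintype ι] [Fintype κ]

lemma posSemidef_transpose_mul_self (A : Matrix ι κ ℝ) : (Aᵀ * A).PosSemidef := by
  simpa using posSemidef_conjTranspose_mul_self A

lemma dotProduct_transpose_mul_self_mulVec (A : Matrix ι κ ℝ) (x : κ → ℝ) :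
    x ⬝ᵥ (Aᵀ * A) *ᵥ x = A *ᵥ x ⬝ᵥ A *ᵥ x := by
  rw [← mulVec_mulVec, dotProduct_mulVec, vecMul_transpose]

lemma dotProduct_mulVec_self_of_transpose_mul_self_eq_one [DecidableEq κ] {M : Matrix ι κ ℝ}
    (hM : Mᵀ * M = 1) (w : κ → ℝ) : M *ᵥ w ⬝ᵥ M *ᵥ w = w ⬝ᵥ w := by
  rw [← dotProduct_transpose_mul_self_mulVec, hM, one_mulVec]

lemma dotProduct_mulVec_self_le_of_mul_transpose_eq_one [DecidableEq κ] {B : Matrix κ ι ℝ}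
    (hB : B * Bᵀ = 1) (y : ι → ℝ) : B *ᵥ y ⬝ᵥ B *ᵥ y ≤ y ⬝ᵥ y := by
  have hproj : y ⬝ᵥ Bᵀ *ᵥ (B *ᵥ y) = B *ᵥ y ⬝ᵥ B *ᵥ y := by
    rw [mulVec_mulVec, dotProduct_transpose_mul_self_mulVec]
  have hiso : Bᵀ *ᵥ (B *ᵥ y) ⬝ᵥ Bᵀ *ᵥ (B *ᵥ y) = B *ᵥ y ⬝ᵥ B *ᵥ y :=
    dotProduct_mulVec_self_of_transpose_mul_self_eq_one (by rwa [transpose_transpose]) _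
  -- Pythagoras for the orthogonal projection `BᵀB`
  have hpyth : (y - Bᵀ *ᵥ (B *ᵥ y)) ⬝ᵥ (y - Bᵀ *ᵥ (B *ᵥ y)) = y ⬝ᵥ y - B *ᵥ y ⬝ᵥ B *ᵥ y := by
    simp only [sub_dotProduct, dotProduct_sub, dotProduct_comm _ y, hproj, hiso]
    ring
  have hnonneg := dotProduct_star_self_nonneg (y - Bᵀ *ᵥ (B *ᵥ y))
  rw [star_trivial] at hnonneg
  linarith

lemma card_filter_le_finrank_ker_submatrix_mulVecLin (Q : Matrix ι ι ℝ) (p : ι → Prop)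
    [DecidablePred p] :
    #{j | p j} ≤ finrank ℝ (LinearMap.ker (Q.submatrix ((↑) : {j // ¬ p j} → ι) id).mulVecLin) := by
  have hnull := LinearMap.finrank_range_add_finrank_ker
    (Q.submatrix ((↑) : {j // ¬ p j} → ι) id).mulVecLin
  have hrange := (LinearMap.range (Q.submatrix ((↑) : {j // ¬ p j} → ι) id).mulVecLin).finrank_le
  have hcard : #{j | p j} + #{j | ¬ p j} = Fintype.card ι := by
    rw [card_filter_add_card_filter_not, card_univ]
  simp only [finrank_fintype_fun_eq_card, Fintype.card_subtype] at hnull hrange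
  omega

namespace IsHermitian

variable [DecidableEq ι] {H : Matrix ι ι ℝ} (hH : H.IsHermitian)

-- the columns of `U` are the eigenvectors, so `Uᵀ *ᵥ x` lists the coordinates of `x` in that basis
local notation "U" => (IsHermitian.eigenvectorUnitary hH : Matrix ι ι ℝ)

lemma dotProduct_self_eq_sum (x : ι → ℝ) : x ⬝ᵥ x = ∑ j, (Uᵀ *ᵥ x) j ^ 2 := by
  have hU : U * Uᵀ = 1 := by
    simpa [star_eq_conjTranspose] using Unitary.coe_mul_star_self hH.eigenvectorUnitary
  rw [← dotProduct_mulVec_self_of_transpose_mul_self_eq_one (by rwa [transpose_transpose]) x]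
  simp [dotProduct, sq]

lemma dotProduct_mulVec_eq_sum (x : ι → ℝ) :
    x ⬝ᵥ H *ᵥ x = ∑ j, hH.eigenvalues j * (Uᵀ *ᵥ x) j ^ 2 := by
  conv_lhs => rw [hH.spectral_theorem]
  simp only [Unitary.conjStarAlgAut_apply, star_eq_conjTranspose,
    conjTranspose_eq_transpose_of_trivial]
  rw [← mulVec_mulVec, ← mulVec_mulVec, dotProduct_mulVec, ← transpose_transpose U,
    vecMul_transpose, transpose_transpose]
  simp only [dotProduct, mulVec_diagonal, Function.comp_apply, RCLike.ofReal_real_eq_id, id]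
  exact sum_congr rfl fun j _ => by ring

/- In both lemmas below `V` is the span of the eigenvectors whose eigenvalues satisfy the
filter condition, presented as the vectors whose other eigen-coordinates vanish. -/

lemma exists_submodule_dotProduct_mulVec_le (a : ℝ) :
    ∃ V : Submodule ℝ (ι → ℝ), #{j | hH.eigenvalues j ≤ a} ≤ finrank ℝ V ∧
      ∀ x ∈ V, x ⬝ᵥ H *ᵥ x ≤ a * (x ⬝ᵥ x) := by
  refine ⟨_, card_filter_le_finrank_ker_submatrix_mulVecLin Uᵀ _, fun x hx => ?_⟩
  rw [hH.dotProduct_mulVec_eq_sum, hH.dotProduct_self_eq_sum, mul_sum]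
  refine sum_le_sum fun j _ => ?_
  by_cases hj : hH.eigenvalues j ≤ a
  · exact mul_le_mul_of_nonneg_right hj (sq_nonneg _)
  · have : (Uᵀ *ᵥ x) j = 0 := congrFun hx ⟨j, hj⟩
    simp [this]

lemma exists_submodule_le_dotProduct_mulVec (b : ℝ) :
    ∃ V : Submodule ℝ (ι → ℝ), #{j | b ≤ hH.eigenvalues j} ≤ finrank ℝ V ∧
      ∀ x ∈ V, b * (x ⬝ᵥ x) ≤ x ⬝ᵥ H *ᵥ x := by
  refine ⟨_, card_filter_le_finrank_ker_submatrix_mulVecLin Uᵀ _, fun x hx => ?_⟩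
  rw [hH.dotProduct_mulVec_eq_sum, hH.dotProduct_self_eq_sum, mul_sum]
  refine sum_le_sum fun j _ => ?_
  by_cases hj : b ≤ hH.eigenvalues j
  · exact mul_le_mul_of_nonneg_right hj (sq_nonneg _)
  · have : (Uᵀ *ᵥ x) j = 0 := congrFun hx ⟨j, hj⟩
    simp [this]

theorem le_of_card_lt_card_add_card {K : Matrix κ κ ℝ} [DecidableEq κ] (hK : K.IsHermitian)
    {C : Matrix ι κ ℝ} (hC : Cᵀ * C = 1) (hKH : ∀ w, w ⬝ᵥ K *ᵥ w ≤ C *ᵥ w ⬝ᵥ H *ᵥ (C *ᵥ w))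
    {a b : ℝ}
    (hcard : Fintype.card ι < #{j | hH.eigenvalues j ≤ a} + #{j | b ≤ hK.eigenvalues j}) :
    b ≤ a := by
  obtain ⟨V, hV, hVH⟩ := hH.exists_submodule_dotProduct_mulVec_le a
  obtain ⟨W, hW, hWK⟩ := hK.exists_submodule_le_dotProduct_mulVec b
  have hCinj : Function.Injective C.mulVecLin :=
    Function.LeftInverse.injective (g := (Cᵀ *ᵥ ·)) fun w => by simp [mulVec_mulVec, hC]
  have hCW : finrank ℝ (W.map C.mulVecLin) = finrank ℝ W :=
    (Submodule.equivMapOfInjective _ hCinj W).finrank_eq.symm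
  obtain ⟨_, hxV, ⟨w, hwW, rfl⟩, hx0⟩ : ∃ x ∈ V, x ∈ W.map C.mulVecLin ∧ x ≠ 0 := by
    by_contra! h
    have := Submodule.finrank_add_finrank_le_of_disjoint (Submodule.disjoint_def.mpr h)
    rw [finrank_fintype_fun_eq_card] at this
    omega
  rw [mulVecLin_apply] at hxV hx0
  have hw : 0 < w ⬝ᵥ w := by
    have := dotProduct_star_self_pos_iff.mpr fun h : w = 0 => hx0 (by simp [h])
    rwa [star_trivial] at this
  have key : b * (w ⬝ᵥ w) ≤ a * (w ⬝ᵥ w) := calc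
    b * (w ⬝ᵥ w) ≤ w ⬝ᵥ K *ᵥ w := hWK w hwW
    _ ≤ C *ᵥ w ⬝ᵥ H *ᵥ (C *ᵥ w) := hKH w
    _ ≤ a * (C *ᵥ w ⬝ᵥ C *ᵥ w) := hVH _ hxV
    _ = a * (w ⬝ᵥ w) := by rw [dotProduct_mulVec_self_of_transpose_mul_self_eq_one hC]
  exact le_of_mul_le_mul_right key hw

end IsHermitian

end Matrix

namespace IsSingularValues

variable {m n : ℕ} {A : Matrix (Fin m) (Fin n) ℝ} {ρ : Fin n → ℝ}

lemma nonneg (h : IsSingularValues A ρ) (i : Fin n) : 0 ≤ ρ i := by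
  obtain ⟨-, e, he⟩ := h
  exact he i ▸ Real.sqrt_nonneg _

lemma exists_perm_sq_eq (h : IsSingularValues A ρ) (hG : (Aᵀ * A).IsHermitian) :
    ∃ e : Equiv.Perm (Fin n), Antitone (hG.eigenvalues ∘ e) ∧
      ∀ i, ρ i ^ 2 = hG.eigenvalues (e i) := by
  have hnonneg := h.nonneg
  obtain ⟨hanti, e, he⟩ := h
  have hsq : ∀ i, ρ i ^ 2 = hG.eigenvalues (e i) := fun i => by
    rw [he i, Real.sq_sqrt ((posSemidef_transpose_mul_self A).eigenvalues_nonneg _)]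
  refine ⟨e, fun i j hij => ?_, hsq⟩
  simp only [Function.comp_apply, ← hsq]
  exact pow_le_pow_left₀ (hnonneg j) (hanti hij) 2

lemma sub_le_card_eigenvalues_le (h : IsSingularValues A ρ) (hG : (Aᵀ * A).IsHermitian)
    (i : Fin n) : n - i ≤ #{j | hG.eigenvalues j ≤ ρ i ^ 2} := by
  obtain ⟨e, hanti, hsq⟩ := h.exists_perm_sq_eq hG
  simpa only [hsq] using sub_le_card_filter_le_of_antitone_comp e.injective hanti i

lemma succ_le_card_le_eigenvalues (h : IsSingularValues A ρ) (hG : (Aᵀ * A).IsHermitian)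
    (i : Fin n) : i + 1 ≤ #{j | ρ i ^ 2 ≤ hG.eigenvalues j} := by
  obtain ⟨e, hanti, hsq⟩ := h.exists_perm_sq_eq hG
  simpa only [hsq] using succ_le_card_filter_ge_of_antitone_comp e.injective hanti i

end IsSingularValues

theorem stmt1_general {m n k : ℕ} (hk : k ≤ n)
    (A : Matrix (Fin m) (Fin n) ℝ)
    (B₁ : Matrix (Fin k) (Fin m) ℝ) (C₁ : Matrix (Fin n) (Fin k) ℝ)
    (hB₁ : B₁ * B₁ᵀ = 1) (hC₁ : C₁ᵀ * C₁ = 1)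
    (ρ : Fin n → ℝ) (hρ : IsSingularValues A ρ)
    (δ : Fin k → ℝ) (hδ : IsSingularValues (B₁ * A * C₁) δ) :
    ∀ i : Fin k, δ i ≤ ρ (Fin.castLE hk i) := by
  intro i
  have hG := (posSemidef_transpose_mul_self A).isHermitian
  have hK := (posSemidef_transpose_mul_self (B₁ * A * C₁)).isHermitian
  have hcompress : ∀ w, w ⬝ᵥ ((B₁ * A * C₁)ᵀ * (B₁ * A * C₁)) *ᵥ w ≤
      C₁ *ᵥ w ⬝ᵥ (Aᵀ * A) *ᵥ (C₁ *ᵥ w) := fun w => by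
    rw [dotProduct_transpose_mul_self_mulVec, dotProduct_transpose_mul_self_mulVec,
      ← mulVec_mulVec, ← mulVec_mulVec]
    exact dotProduct_mulVec_self_le_of_mul_transpose_eq_one hB₁ _
  have hsq : δ i ^ 2 ≤ ρ (Fin.castLE hk i) ^ 2 := by
    refine hG.le_of_card_lt_card_add_card hK hC₁ hcompress ?_
    have hlow := hρ.sub_le_card_eigenvalues_le hG (Fin.castLE hk i)
    have hhigh := hδ.succ_le_card_le_eigenvalues hK i
    simp only [Fintype.card_fin, Fin.val_castLE] at hlow ⊢
    omega
  exact (pow_le_pow_iff_left₀ (hδ.nonneg i) (hρ.nonneg _) two_ne_zero).mp hsq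

theorem stmt1 {m n k : ℕ} (hmn : n ≤ m) (hk : k ≤ n)
    (A : Matrix (Fin m) (Fin n) ℝ)
    (B₁ : Matrix (Fin k) (Fin m) ℝ) (C₁ : Matrix (Fin n) (Fin k) ℝ)
    (hB₁ : B₁ * B₁ᵀ = 1) (hC₁ : C₁ᵀ * C₁ = 1)
    (ρ : Fin n → ℝ) (hρ : IsSingularValues A ρ)
    (δ : Fin k → ℝ) (hδ : IsSingularValues (B₁ * A * C₁) δ) :
    ∀ i : Fin k, δ i ≤ ρ (Fin.castLE hk i) :=
  stmt1_general hk A B₁ C₁ hB₁ hC₁ ρ hρ δ hδ
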